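/- Let a > 0 and for each x ∈ ℝⁿ let P_{a,x}(y) = (a/2)|y-x|² + t_x be the paraboloid of opening a and center x touching a fixed nonempty closed set Γ̄ ⊆ U^n(0,1) × ℝ from above, where t_x = sup{z_{n+1} - (a/2)|z'-x|² : z ∈ Γ̄} (assumed finite). Then the map x ↦ t_x is Lipschitz on B^n(0,1), and the map sending (w, η) ∈ A_a(Γ;C) to the unique center x = w' + η'/(a·η_{n+1}) is well-defined and surjective onto C whenever A_a(Γ;C) is defined via touching paraboloids with centers in the closed set C ⊆ B^n(0,1) and every center in C admits a touching point. -/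

import Mathlib

open MeasureTheory Metric Set Filter
open scoped RealInnerProductSpace ENNReal NNReal Topology

noncomputable section

/-- `n`-dimensional Euclidean space. -/
abbrev Eu (n : ℕ) := EuclideanSpace ℝ (Fin n)

/-- Append a last coordinate: `(x, t) ∈ ℝⁿ × ℝ ≅ ℝ^(n+1)`. -/
def snoc' {n : ℕ} (x : Eu n) (t : ℝ) : Eu (n+1) :=
  WithLp.toLp 2 (Fin.snoc (α := fun _ => ℝ) (WithLp.ofLp x) t)

/-- The first `n` coordinates `z'` of `z ∈ ℝ^(n+1)`. -/
def tail' {n : ℕ} (z : Eu (n+1)) : Eu n := WithLp.toLp 2 (fun i : Fin n => z i.castSucc)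

/-- The last coordinate `z_{n+1}` of `z ∈ ℝ^(n+1)`. -/
def lastc {n : ℕ} (z : Eu (n+1)) : ℝ := z (Fin.last n)

/-- The graph `Σ(f)` of `f : ℝⁿ → ℝ`. -/
def graphOf {n : ℕ} (f : Eu n → ℝ) : Set (Eu (n+1)) := {z | lastc z = f (tail' z)}

/-- The open supergraph `Σ⁺(f)`. -/
def supergraphOf {n : ℕ} (f : Eu n → ℝ) : Set (Eu (n+1)) := {z | f (tail' z) < lastc z}

/-- The paraboloid of opening `a`, center `x` and height `t`. -/
def par {n : ℕ} (a : ℝ) (x : Eu n) (t : ℝ) : Eu n → ℝ := fun y => a/2 * ‖y - x‖^2 + t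

/-- The upward unit normal `(-g,1)/√(1+|g|²)` associated to the gradient `g`. -/
def upNormal {n : ℕ} (g : Eu n) : Eu (n+1) := (Real.sqrt (1+‖g‖^2))⁻¹ • snoc' (-g) 1

/-- `f` touches the closed set `K` from above. -/
def TouchesFromAbove {n : ℕ} (f : Eu n → ℝ) (K : Set (Eu (n+1))) : Prop :=
  (graphOf f ∩ K).Nonempty ∧ supergraphOf f ∩ K = ∅

/-- The touching set `A_a(Γ; C)`: pairs `(z, η)` where `z` is a touching point of the
paraboloid `P_{a,x}` (opening `a`, center `x ∈ C`) with `Γ̄`, and `η` is the upward unit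
normal to `Σ(P_{a,x})` at `z`. -/
def ASet {n : ℕ} (a : ℝ) (Γ : Set (Eu (n+1))) (C : Set (Eu n)) :
    Set (Eu (n+1) × Eu (n+1)) :=
  {p | ∃ x ∈ C, ∃ t : ℝ, TouchesFromAbove (par a x t) (closure Γ) ∧
    p.1 ∈ graphOf (par a x t) ∩ closure Γ ∧
    p.2 = upNormal (a • (tail' p.1 - x))}

/-- The horizontal projection `A'_a(Γ; C)`. -/
def ASet' {n : ℕ} (a : ℝ) (Γ : Set (Eu (n+1))) (C : Set (Eu n)) : Set (Eu n) :=
  (fun p => tail' p.1) '' ASet a Γ C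

/-- The open cylinder `𝒞₁(0) = U^n(0,1) × ℝ`. -/
def cyl (n : ℕ) : Set (Eu (n+1)) := {z | ‖tail' z‖ < 1}

/-- Sum of the lowest `m` eigenvalues of a symmetric bilinear form (Ky Fan): the infimum
of `∑ B(uᵢ,uᵢ)` over orthonormal families `u : Fin m → E`. -/
def traceLowest (m : ℕ) {E : Type*} [NormedAddCommGroup E] [InnerProductSpace ℝ E]
    (B : E →L[ℝ] E →L[ℝ] ℝ) : ℝ :=
  sInf {s | ∃ u : Fin m → E, Orthonormal ℝ u ∧ s = ∑ i, B (u i) (u i)}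

/-- `Γ` is an `(m,h)` subset of `Ω`: it is relatively closed in `Ω` and for every `x ∈ Γ`
and `C²` function `f` near `x` such that `f|Γ` has a local maximum at `x` and `∇f(x) ≠ 0`,
the sum of the lowest `m` eigenvalues of `Hess f(x)` is at most `h|∇f(x)|`. -/
def IsMH {n : ℕ} (m : ℕ) (h : ℝ) (Ω Γ : Set (Eu (n+1))) : Prop :=
  Γ ⊆ Ω ∧ closure Γ ∩ Ω ⊆ Γ ∧
  ∀ x ∈ Γ, ∀ f : Eu (n+1) → ℝ, (∃ U ∈ 𝓝 x, ContDiffOn ℝ 2 f U) →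
    IsLocalMaxOn f Γ x → gradient f x ≠ 0 →
    traceLowest m (fderiv ℝ (fderiv ℝ f) x) ≤ h * ‖gradient f x‖

/-- Divergence of a vector field on `ℝⁿ`. -/
def divg {n : ℕ} (W : Eu n → Eu n) (x : Eu n) : ℝ :=
  LinearMap.trace ℝ (Eu n) (fderiv ℝ W x : Eu n →ₗ[ℝ] Eu n)

/-- `div(∇ψ/√(1+|∇ψ|²))(x)`, the trace of the second fundamental form of the graph of `ψ`
over `x` with respect to the upward unit normal. -/
def meanCurvGraph {n : ℕ} (ψ : Eu n → ℝ) (x : Eu n) : ℝ :=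
  divg (fun y => (Real.sqrt (1 + ‖gradient ψ y‖^2))⁻¹ • gradient ψ y) x

/-- The `m`-th stratum `Γ^(m)`: points of `Γ` that can be touched from `n+1-m` linearly
independent directions by open balls of `ℝ^(n+1)`. -/
def stratum {n : ℕ} (m : ℕ) (Γ : Set (Eu (n+1))) : Set (Eu (n+1)) :=
  {z ∈ Γ | ∃ v : Fin (n+1-m) → Eu (n+1), LinearIndependent ℝ v ∧
    ∀ i, ‖v i‖ = 1 ∧ ∃ r > (0:ℝ), Metric.ball (z + r • v i) r ∩ Γ = ∅}

/-! `t_x` is the supremum over `z ∈ Γ̄` of `x ↦ z_{n+1} - (a/2)|z' - x|²`; since `|z'| ≤ 1`, these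
functions are uniformly `2a`-Lipschitz on `B^n(0,1)`, hence so is their supremum. The upward normal
to `Σ(P_{a,x})` at `w` is proportional to `(-a(w' - x), 1)`, so `w' + η'/(a η_{n+1}) = x`: the vertex
map returns the center, and since `P_{a,x}` with height `t_x` touches `Γ̄` from above, every center in
`C` is attained. -/

lemma tail'_smul {n : ℕ} (c : ℝ) (z : Eu (n+1)) : tail' (c • z) = c • tail' z := rfl

lemma lastc_smul {n : ℕ} (c : ℝ) (z : Eu (n+1)) : lastc (c • z) = c * lastc z := rfl

lemma tail'_snoc' {n : ℕ} (x : Eu n) (t : ℝ) : tail' (snoc' x t) = x := by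
  ext i; simp [tail', snoc']

lemma lastc_snoc' {n : ℕ} (x : Eu n) (t : ℝ) : lastc (snoc' x t) = t := by
  simp [lastc, snoc']

lemma continuous_tail' {n : ℕ} : Continuous (tail' : Eu (n+1) → Eu n) := by
  unfold tail'
  fun_prop

lemma tail'_upNormal {n : ℕ} (g : Eu n) :
    tail' (upNormal g) = -((Real.sqrt (1 + ‖g‖^2))⁻¹ • g) := by
  rw [upNormal, tail'_smul, tail'_snoc', smul_neg]

lemma lastc_upNormal {n : ℕ} (g : Eu n) : lastc (upNormal g) = (Real.sqrt (1 + ‖g‖^2))⁻¹ := by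
  rw [upNormal, lastc_smul, lastc_snoc', mul_one]

lemma vertex_upNormal {n : ℕ} {a : ℝ} (ha : a ≠ 0) (w : Eu (n+1)) (x : Eu n) :
    tail' w + (a * lastc (upNormal (a • (tail' w - x))))⁻¹ •
      tail' (upNormal (a • (tail' w - x))) = x := by
  have hs : Real.sqrt (1 + ‖a • (tail' w - x)‖^2) ≠ 0 := (Real.sqrt_pos.mpr (by positivity)).ne'
  rw [lastc_upNormal, tail'_upNormal, smul_neg, smul_smul, smul_smul,
    show (a * (Real.sqrt _)⁻¹)⁻¹ * (Real.sqrt _)⁻¹ * a = 1 by field_simp, one_smul]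
  abel

lemma LipschitzOnWith.of_forall_isLUB {α ι : Type*} [PseudoMetricSpace α] {K : ℝ≥0}
    {s : Set α} {I : Set ι} {F : ι → α → ℝ} {f : α → ℝ}
    (hF : ∀ i ∈ I, LipschitzOnWith K (F i) s)
    (hf : ∀ x ∈ s, IsLUB {r | ∃ i ∈ I, r = F i x} (f x)) : LipschitzOnWith K f s := by
  refine LipschitzOnWith.of_le_add_mul K fun u hu v hv => (hf u hu).2 ?_
  rintro _ ⟨i, hi, rfl⟩
  have := (hF i hi).le_add_mul hu hv
  have := (hf v hv).1 ⟨i, hi, rfl⟩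
  linarith

lemma lipschitzOnWith_sub_mul_norm_sub_sq {E : Type*} [SeminormedAddCommGroup E] {a R : ℝ}
    (ha : 0 ≤ a) {y : E} (hy : ‖y‖ ≤ R) (c : ℝ) :
    LipschitzOnWith (2 * a * R).toNNReal (fun x => c - a / 2 * ‖y - x‖^2)
      (closedBall 0 R) := by
  refine LipschitzOnWith.of_le_add_mul' _ fun u hu v hv => ?_
  rw [mem_closedBall_zero_iff] at hu hv
  have hdiff : ‖y - v‖ - ‖y - u‖ ≤ dist u v := by
    simpa only [dist_eq_norm, sub_sub_sub_cancel_left] using norm_sub_norm_le (y - v) (y - u)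
  have hsum : ‖y - v‖ + ‖y - u‖ ≤ 4 * R := by
    linarith [norm_sub_le y v, norm_sub_le y u]
  have hsq : ‖y - v‖^2 - ‖y - u‖^2 ≤ 4 * R * dist u v := by
    nlinarith [norm_nonneg (y - v), norm_nonneg (y - u), dist_nonneg (x := u) (y := v)]
  nlinarith

lemma norm_tail'_le_one_of_mem_closure {n : ℕ} {Γ : Set (Eu (n+1))} (hΓ : Γ ⊆ cyl n)
    {z : Eu (n+1)} (hz : z ∈ closure Γ) : ‖tail' z‖ ≤ 1 :=
  closure_minimal (fun _ hw => (hΓ hw).le) (isClosed_le continuous_tail'.norm continuous_const) hz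

lemma supergraphOf_par_inter_eq_empty {n : ℕ} {a t : ℝ} {x : Eu n} {K : Set (Eu (n+1))}
    (ht : t ∈ upperBounds {s | ∃ z ∈ K, s = lastc z - a/2 * ‖tail' z - x‖^2}) :
    supergraphOf (par a x t) ∩ K = ∅ := by
  refine eq_empty_of_forall_notMem fun z ⟨hz, hzK⟩ => ?_
  have := ht ⟨z, hzK, rfl⟩
  rw [supergraphOf, mem_ofPred_eq, par] at hz
  linarith

lemma image_vertex_ASet {n : ℕ} {a : ℝ} (ha : a ≠ 0) {Γ : Set (Eu (n+1))} {C : Set (Eu n)}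
    (hC : ∀ x ∈ C, ∃ t, TouchesFromAbove (par a x t) (closure Γ)) :
    (fun p : Eu (n+1) × Eu (n+1) => tail' p.1 + (a * lastc p.2)⁻¹ • tail' p.2) ''
      ASet a Γ C = C := by
  refine Subset.antisymm ?_ fun x hx => ?_
  · rintro _ ⟨p, ⟨x, hx, -, -, -, hp⟩, rfl⟩
    dsimp only
    rwa [hp, vertex_upNormal ha]
  · obtain ⟨t, htouch⟩ := hC x hx
    obtain ⟨w, hw⟩ := htouch.1
    exact ⟨(w, upNormal (a • (tail' w - x))), ⟨x, hx, t, htouch, hw, rfl⟩, vertex_upNormal ha w x⟩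

theorem stmt9_general (n : ℕ) (a : ℝ) (ha : 0 < a) (Γ : Set (Eu (n+1)))
    (hΓsub : Γ ⊆ cyl n)
    (tx : Eu n → ℝ)
    (htx : ∀ x, IsLUB {s | ∃ z ∈ closure Γ, s = lastc z - a/2 * ‖tail' z - x‖^2} (tx x))
    (C : Set (Eu n))
    (hCtouch : ∀ x ∈ C, (graphOf (par a x (tx x)) ∩ closure Γ).Nonempty) :
    (∃ K : ℝ≥0, LipschitzOnWith K tx (Metric.closedBall 0 1)) ∧
      (fun p : Eu (n+1) × Eu (n+1) => tail' p.1 + (a * lastc p.2)⁻¹ • tail' p.2) ''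
        ASet a Γ C = C := by
  have hlip : ∀ z ∈ closure Γ, LipschitzOnWith (2 * a * 1).toNNReal
      (fun x => lastc z - a/2 * ‖tail' z - x‖^2) (closedBall 0 1) := fun z hz =>
    lipschitzOnWith_sub_mul_norm_sub_sq ha.le (norm_tail'_le_one_of_mem_closure hΓsub hz) _
  refine ⟨⟨_, .of_forall_isLUB hlip fun x _ => htx x⟩,
    image_vertex_ASet ha.ne' fun x hx => ⟨tx x, hCtouch x hx, ?_⟩⟩
  exact supergraphOf_par_inter_eq_empty (htx x).1

/-- For a nonempty closed set `Γ̄ ⊆ U^n(0,1) × ℝ` and `a > 0`, let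
`t_x = sup {z_{n+1} - (a/2)|z'-x|² : z ∈ Γ̄}` (assumed finite), so that
`P_{a,x}(y) = (a/2)|y-x|² + t_x` touches `Γ̄` from above. Then `x ↦ t_x` is Lipschitz on
`B^n(0,1)`, and the vertex map `(w,η) ↦ w' + η'/(a·η_{n+1})` maps `A_a(Γ;C)` onto `C`,
provided `C ⊆ B^n(0,1)` is closed and every center of `C` admits a touching point. -/
theorem stmt9 (n : ℕ) (a : ℝ) (ha : 0 < a) (Γ : Set (Eu (n+1)))
    (hΓsub : Γ ⊆ cyl n) (hΓcl : closure Γ ∩ cyl n ⊆ Γ) (hne : Γ.Nonempty)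
    (tx : Eu n → ℝ)
    (htx : ∀ x, IsLUB {s | ∃ z ∈ closure Γ, s = lastc z - a/2 * ‖tail' z - x‖^2} (tx x))
    (C : Set (Eu n)) (hC : IsClosed C) (hCsub : C ⊆ Metric.closedBall 0 1)
    (hCtouch : ∀ x ∈ C, (graphOf (par a x (tx x)) ∩ closure Γ).Nonempty) :
    (∃ K : ℝ≥0, LipschitzOnWith K tx (Metric.closedBall 0 1)) ∧
      (fun p : Eu (n+1) × Eu (n+1) => tail' p.1 + (a * lastc p.2)⁻¹ • tail' p.2) ''
        ASet a Γ C = C :=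
  stmt9_general n a ha Γ hΓsub tx htx C hCtouch
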